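/- A nonempty compact, Hausdorff, second-countable, totally disconnected topological space which is not homeomorphic to the Cantor set has an isolated point. -/

import Mathlib

open Function

noncomputable def cFun (b : Bool) : ℝ := if b then 2 else 0

lemma cFun_nonneg (b : Bool) : 0 ≤ cFun b := by cases b <;> simp [cFun]
lemma cFun_le (b : Bool) : cFun b ≤ 2 := by cases b <;> simp [cFun]

noncomputable def hFun (x : ℕ → Bool) : ℝ := ∑' n, cFun (x n) / 3 ^ (n + 1)

lemma summable_geo : Summable (fun n : ℕ => (2:ℝ)/3 * (1/3) ^ n) :=
  (summable_geometric_of_lt_one (by norm_num) (by norm_num)).mul_left _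

lemma term_le (x : ℕ → Bool) (n : ℕ) : cFun (x n) / 3 ^ (n+1) ≤ (2:ℝ)/3 * (1/3) ^ n := by
  have h : ((2:ℝ)/3) * (1/3)^n = 2 / 3 ^ (n+1) := by
    rw [pow_succ]; field_simp; rw [← mul_pow]; norm_num
  rw [h]
  exact (div_le_div_iff_of_pos_right (by positivity)).2 (cFun_le _)

lemma summable_hFun (x : ℕ → Bool) : Summable (fun n => cFun (x n) / 3 ^ (n + 1)) :=
  Summable.of_nonneg_of_le (fun n => div_nonneg (cFun_nonneg _) (by positivity)) (term_le x) summable_geo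

lemma hFun_nonneg (x : ℕ → Bool) : 0 ≤ hFun x :=
  tsum_nonneg fun n => div_nonneg (cFun_nonneg _) (by positivity)

lemma hFun_le_one (x : ℕ → Bool) : hFun x ≤ 1 := by
  have h1 : hFun x ≤ ∑' n : ℕ, (2:ℝ)/3 * (1/3) ^ n :=
    Summable.tsum_le_tsum (term_le x) (summable_hFun x) summable_geo
  have h2 : ∑' n : ℕ, (2:ℝ)/3 * (1/3) ^ n = 1 := by
    rw [tsum_mul_left, tsum_geometric_of_lt_one (by norm_num) (by norm_num)]
    norm_num
  linarith

lemma hFun_succ (x : ℕ → Bool) : hFun x = (cFun (x 0) + hFun (fun n => x (n + 1))) / 3 := by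
  rw [hFun, Summable.tsum_eq_zero_add (summable_hFun x)]
  have h : ∀ n : ℕ, cFun (x (n+1)) / 3 ^ (n+1+1) = (1/3) * (cFun (x (n+1)) / 3 ^ (n+1)) := by
    intro n; rw [pow_succ]; ring
  rw [tsum_congr h, tsum_mul_left]
  rw [hFun]
  ring

lemma hFun_dist : ∀ n (x y : ℕ → Bool), (∀ i < n, x i = y i) →
    |hFun x - hFun y| ≤ (1/3) ^ n := by
  intro n
  induction n with
  | zero =>
    intro x y _
    rw [pow_zero, abs_sub_le_iff]
    constructor <;> nlinarith [hFun_nonneg x, hFun_le_one x, hFun_nonneg y, hFun_le_one y]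
  | succ n ih =>
    intro x y hxy
    have h0 : x 0 = y 0 := hxy 0 (Nat.succ_pos n)
    rw [hFun_succ x, hFun_succ y, h0]
    have := ih (fun i => x (i+1)) (fun i => y (i+1)) (fun i hi => hxy (i+1) (by omega))
    rw [show (cFun (y 0) + hFun fun n => x (n + 1)) / 3 - (cFun (y 0) + hFun fun n => y (n + 1)) / 3
      = ((hFun fun n => x (n+1)) - (hFun fun n => y (n+1))) / 3 by ring, abs_div, pow_succ]
    rw [abs_of_pos (by norm_num : (0:ℝ) < 3)]
    nlinarith [abs_nonneg ((hFun fun n => x (n+1)) - (hFun fun n => y (n+1)))]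

lemma digit0_eq (x y : ℕ → Bool) (h : hFun x = hFun y) : x 0 = y 0 := by
  by_contra hne
  have h2 : |cFun (x 0) - cFun (y 0)| = 2 := by
    cases hx : x 0 <;> cases hy : y 0 <;> simp_all [cFun] <;> norm_num
  have hx' := hFun_succ x
  have hy' := hFun_succ y
  have heq : cFun (x 0) - cFun (y 0) = (hFun fun n => y (n+1)) - (hFun fun n => x (n+1)) := by
    rw [hx', hy'] at h; linarith
  have := hFun_nonneg (fun n => x (n+1))
  have := hFun_le_one (fun n => x (n+1))
  have := hFun_nonneg (fun n => y (n+1))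
  have := hFun_le_one (fun n => y (n+1))
  rw [heq] at h2
  rw [abs_eq (by norm_num : (0:ℝ) ≤ 2)] at h2
  rcases h2 with h2 | h2 <;> linarith

lemma hFun_injective : Function.Injective hFun := by
  have key : ∀ n (x y : ℕ → Bool), hFun x = hFun y → x n = y n := by
    intro n
    induction n with
    | zero => exact digit0_eq
    | succ n ih =>
      intro x y h
      have h0 := digit0_eq x y h
      have htail : hFun (fun n => x (n+1)) = hFun (fun n => y (n+1)) := by
        rw [hFun_succ x, hFun_succ y, h0] at h
        field_simp at h
        linarith
      exact ih _ _ htail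
  intro x y h
  exact funext fun n => key n x y h

lemma preCantorSet_subset_unitInterval' : ∀ n, preCantorSet n ⊆ Set.Icc 0 1 := by
  intro n
  induction n with
  | zero => simp [preCantorSet]
  | succ n ih =>
    rintro y (⟨z, hz, rfl⟩ | ⟨z, hz, rfl⟩)
    · obtain ⟨h0, h1⟩ := ih hz
      constructor <;> dsimp <;> linarith
    · obtain ⟨h0, h1⟩ := ih hz
      constructor <;> dsimp <;> linarith

lemma hFun_mem_pre : ∀ n (x : ℕ → Bool), hFun x ∈ preCantorSet n := by
  intro n
  induction n with
  | zero => exact fun x => ⟨hFun_nonneg x, hFun_le_one x⟩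
  | succ n ih =>
    intro x
    cases hx : x 0 with
    | false =>
      left
      refine ⟨hFun (fun n => x (n+1)), ih _, ?_⟩
      rw [hFun_succ x, hx]
      simp [cFun]
    | true =>
      right
      refine ⟨hFun (fun n => x (n+1)), ih _, ?_⟩
      rw [hFun_succ x, hx]
      simp [cFun]

lemma hFun_mem_cantorSet (x : ℕ → Bool) : hFun x ∈ cantorSet :=
  Set.mem_iInter.mpr fun n => hFun_mem_pre n x

noncomputable def stepF (y : ℝ) : ℝ := if y < 2/3 then 3 * y else 3 * y - 2

lemma stepF_mem {y : ℝ} (hy : y ∈ cantorSet) : stepF y ∈ cantorSet := by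
  rw [cantorSet, Set.mem_iInter] at hy ⊢
  intro n
  have h1 := hy (n + 1)
  rw [preCantorSet_succ] at h1
  rw [stepF]
  split_ifs with hc
  · rcases h1 with ⟨z, hz, rfl⟩ | ⟨z, hz, rfl⟩
    · have : 3 * (z / 3) = z := by ring
      rwa [this]
    · obtain ⟨h0, _⟩ := preCantorSet_subset_unitInterval' n hz
      exfalso; revert hc; simp only [not_lt]; intro hc; linarith
  · rcases h1 with ⟨z, hz, rfl⟩ | ⟨z, hz, rfl⟩
    · obtain ⟨_, h1'⟩ := preCantorSet_subset_unitInterval' n hz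
      exfalso; apply hc; dsimp; linarith
    · have : 3 * ((2 + z) / 3) - 2 = z := by ring
      rwa [this]

noncomputable def digits (y : ℝ) (n : ℕ) : Bool := decide (¬ (stepF^[n] y < 2/3))

lemma digits_shift (y : ℝ) : (fun n => digits y (n + 1)) = digits (stepF y) := by
  funext n
  simp [digits, Function.iterate_succ_apply]

lemma approx : ∀ n, ∀ y ∈ cantorSet, |y - hFun (digits y)| ≤ (1/3) ^ n := by
  intro n
  induction n with
  | zero =>
    intro y hy
    obtain ⟨h0, h1⟩ := cantorSet_subset_unitInterval hy
    rw [pow_zero, abs_sub_le_iff]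
    have := hFun_nonneg (digits y)
    have := hFun_le_one (digits y)
    constructor <;> linarith
  | succ n ih =>
    intro y hy
    have hm := stepF_mem hy
    have hih := ih (stepF y) hm
    rw [hFun_succ, digits_shift]
    by_cases hc : y < 2/3
    · have hd : digits y 0 = false := by simp [digits, hc]
      have hs : stepF y = 3 * y := if_pos hc
      rw [hd]
      have : y - (cFun false + hFun (digits (stepF y))) / 3
          = (stepF y - hFun (digits (stepF y))) / 3 := by
        rw [hs]; simp [cFun]; ring
      rw [this, abs_div, abs_of_pos (by norm_num : (0:ℝ) < 3), pow_succ]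
      nlinarith [abs_nonneg (stepF y - hFun (digits (stepF y)))]
    · have hd : digits y 0 = true := by simp [digits, hc]
      have hs : stepF y = 3 * y - 2 := if_neg hc
      rw [hd]
      have : y - (cFun true + hFun (digits (stepF y))) / 3
          = (stepF y - hFun (digits (stepF y))) / 3 := by
        rw [hs]; simp [cFun]; ring
      rw [this, abs_div, abs_of_pos (by norm_num : (0:ℝ) < 3), pow_succ]
      nlinarith [abs_nonneg (stepF y - hFun (digits (stepF y)))]

lemma hFun_surj_cantor {y : ℝ} (hy : y ∈ cantorSet) : hFun (digits y) = y := by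
  have h0 : |y - hFun (digits y)| ≤ 0 := by
    refine ge_of_tendsto' (tendsto_pow_atTop_nhds_zero_of_lt_one (by norm_num) (by norm_num)
      : Filter.Tendsto (fun n : ℕ => (1/3:ℝ)^n) Filter.atTop (nhds 0)) ?_
    exact fun n => approx n y hy
  have := abs_nonneg (y - hFun (digits y))
  have : y - hFun (digits y) = 0 := abs_eq_zero.mp (le_antisymm h0 this)
  linarith

lemma hFun_continuous : Continuous hFun := by
  apply continuous_tsum (u := fun n : ℕ => (2:ℝ)/3 * (1/3)^n)
  · intro n
    exact ((continuous_of_discreteTopology (f := cFun)).comp (continuous_apply n)).div_const _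
  · exact summable_geo
  · intro n x
    rw [Real.norm_eq_abs, abs_of_nonneg (div_nonneg (cFun_nonneg _) (by positivity))]
    exact term_le x n

noncomputable def cantorBoolEquiv : (ℕ → Bool) ≃ cantorSet := by
  refine Equiv.ofBijective (fun x => ⟨hFun x, hFun_mem_cantorSet x⟩) ⟨?_, ?_⟩
  · intro x y h
    exact hFun_injective (congrArg Subtype.val h)
  · rintro ⟨y, hy⟩
    exact ⟨digits y, Subtype.ext (hFun_surj_cantor hy)⟩

noncomputable def cantorBoolHomeo : (ℕ → Bool) ≃ₜ cantorSet :=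
  Continuous.homeoOfEquivCompactToT2
    (f := cantorBoolEquiv) (hFun_continuous.subtype_mk _)


open Function Set

section PartC

variable {X : Type*} [MetricSpace X] [CompactSpace X] [T2Space X] [TotallyDisconnectedSpace X]

/-- `F` is a partition of `C` into nonempty clopen pieces. -/
def IsPart {ι : Type} (F : ι → Set X) (C : Set X) : Prop :=
  (∀ i, IsClopen (F i)) ∧ (∀ i, (F i).Nonempty) ∧ Pairwise (Function.onFun Disjoint F) ∧
    (⋃ i, F i) = C

def SmallS {ι : Type} (F : ι → Set X) (ε : ℝ) : Prop :=
  ∀ i, ∀ a ∈ F i, ∀ b ∈ F i, dist a b ≤ ε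

lemma IsPart.subset {ι : Type} {F : ι → Set X} {C : Set X} (h : IsPart F C) (i : ι) :
    F i ⊆ C := h.2.2.2 ▸ Set.subset_iUnion F i

/-- Split a nonempty clopen set with no isolated points into two
nonempty disjoint clopen pieces. -/
lemma split_two (hne : ∀ x : X, ¬ IsOpen ({x} : Set X)) {C : Set X} (hC : IsClopen C)
    (hCne : C.Nonempty) :
    ∃ A B : Set X, IsClopen A ∧ IsClopen B ∧ A.Nonempty ∧ B.Nonempty ∧
      Disjoint A B ∧ A ∪ B = C := by
  obtain ⟨x, hx⟩ := hCne
  have : ∃ y ∈ C, y ≠ x := by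
    by_contra hy
    push_neg at hy
    have : C = {x} := Set.eq_singleton_iff_unique_mem.mpr ⟨hx, hy⟩
    exact hne x (this ▸ hC.2)
  obtain ⟨y, hyC, hyx⟩ := this
  have hopen : IsOpen (C \ {y}) := hC.2.sdiff isClosed_singleton
  have hxmem : x ∈ C \ {y} := ⟨hx, by simp [Ne.symm hyx]⟩
  obtain ⟨V, hV, hxV, hVsub⟩ := compact_exists_isClopen_in_isOpen hopen hxmem
  refine ⟨V, C \ V, hV, hC.diff hV, ⟨x, hxV⟩, ⟨y, hyC, fun hyV => (hVsub hyV).2 rfl⟩,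
    disjoint_sdiff_right.mono_left le_rfl, ?_⟩
  rw [Set.union_diff_self, Set.union_eq_right.mpr]
  exact fun z hz => (hVsub hz).1

/-- Cover a nonempty clopen set by finitely many nonempty disjoint clopen sets of
diameter at most ε. -/
lemma exists_fin_partition {C : Set X} (hC : IsClopen C) (hCne : C.Nonempty) {ε : ℝ}
    (hε : 0 < ε) :
    ∃ (n : ℕ) (F : Fin (n + 1) → Set X), IsPart F C ∧ SmallS F ε := by
  -- clopen neighborhoods of small diameter
  have hV : ∀ x : C, ∃ V : Set X, IsClopen V ∧ (x : X) ∈ V ∧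
      V ⊆ Metric.ball (x : X) (ε / 2) ∩ C := by
    rintro ⟨x, hx⟩
    exact compact_exists_isClopen_in_isOpen
      (Metric.isOpen_ball.inter hC.2) ⟨Metric.mem_ball_self (by linarith), hx⟩
  choose V hVclopen hVmem hVsub using hV
  obtain ⟨t, ht⟩ := (hC.1.isCompact).elim_finite_subcover V (fun x => (hVclopen x).2)
    (fun x hx => Set.mem_iUnion.mpr ⟨⟨x, hx⟩, hVmem ⟨x, hx⟩⟩)
  -- list the sets
  classical
  obtain ⟨k, e⟩ : ∃ k : ℕ, Nonempty ({i // i ∈ t} ≃ Fin k) := ⟨t.card, ⟨t.equivFin⟩⟩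
  obtain ⟨e⟩ := e
  set U : Fin k → Set X := fun i => V (e.symm i) with hU
  have hUclopen : ∀ i, IsClopen (U i) := fun i => hVclopen _
  have hUsmall : ∀ i, ∀ a ∈ U i, ∀ b ∈ U i, dist a b ≤ ε := by
    intro i a ha b hb
    have ha' := (hVsub _ ha).1
    have hb' := (hVsub _ hb).1
    rw [Metric.mem_ball] at ha' hb'
    have h1 := dist_triangle a ((e.symm i).1 : X) b
    have h2 : dist ((e.symm i).1 : X) b = dist b ((e.symm i).1 : X) := dist_comm _ _
    linarith
  have hUsubC : ∀ i, U i ⊆ C := fun i => (Set.subset_inter_iff.mp (hVsub _)).2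
  have hcover : C ⊆ ⋃ i, U i := by
    intro z hz
    obtain ⟨x, hxt⟩ := Set.mem_iUnion₂.mp (ht hz)
    exact Set.mem_iUnion.mpr ⟨e ⟨x, hxt.1⟩, by simpa [hU] using hxt.2⟩
  -- disjointify
  set W : Fin k → Set X := fun i => (U i ∩ C) \ ⋃ j : Fin k, ⋃ (_ : j < i), U j with hW
  have hWclopen : ∀ i, IsClopen (W i) := by
    intro i
    refine ((hUclopen i).inter hC).diff ?_
    have : (⋃ j : Fin k, ⋃ (_ : j < i), U j) = ⋃ j ∈ {j : Fin k | j < i}, U j := by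
      simp [Set.mem_setOf_eq]
    rw [this]
    exact (Set.toFinite _).isClopen_biUnion (fun j _ => hUclopen j)
  have hWsub : ∀ i, W i ⊆ U i := fun i z hz => hz.1.1
  have hWdisj : Pairwise (Function.onFun Disjoint W) := by
    intro i j hij
    rcases lt_or_gt_of_ne hij with hlt | hlt
    · rw [Function.onFun, Set.disjoint_left]
      rintro z hz hz'
      exact hz'.2 (Set.mem_iUnion.mpr ⟨i, Set.mem_iUnion.mpr ⟨hlt, hWsub i hz⟩⟩)
    · rw [Function.onFun, Set.disjoint_left]
      rintro z hz hz'
      exact hz.2 (Set.mem_iUnion.mpr ⟨j, Set.mem_iUnion.mpr ⟨hlt, hWsub j hz'⟩⟩)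
  have hWunion : (⋃ i, W i) = C := by
    apply Set.Subset.antisymm
    · exact Set.iUnion_subset fun i z hz => hz.1.2
    · intro z hz
      obtain ⟨i0, hi0⟩ := Set.mem_iUnion.mp (hcover hz)
      -- take the least such index
      have hex : ∃ n : ℕ, ∃ h : n < k, z ∈ U ⟨n, h⟩ := ⟨i0.1, i0.2, by simpa using hi0⟩
      obtain ⟨hn, hzn⟩ := Nat.find_spec hex
      refine Set.mem_iUnion.mpr ⟨⟨Nat.find hex, hn⟩, ⟨⟨hzn, hz⟩, ?_⟩⟩
      rintro hmem
      obtain ⟨j, hj⟩ := Set.mem_iUnion.mp hmem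
      obtain ⟨hji, hzj⟩ := Set.mem_iUnion.mp hj
      exact absurd ⟨j.2, by simpa using hzj⟩ (Nat.find_min hex (m := j.1) hji)
  -- restrict to nonempty pieces
  set ι' := {i : Fin k // (W i).Nonempty} with hι'
  have : Finite ι' := Subtype.finite
  have hι'ne : Nonempty ι' := by
    obtain ⟨z, hz⟩ := hCne
    obtain ⟨i, hi⟩ := Set.mem_iUnion.mp (hWunion ▸ hz)
    exact ⟨⟨i, ⟨z, hi⟩⟩⟩
  obtain ⟨n, f⟩ : ∃ n : ℕ, Nonempty (ι' ≃ Fin (n + 1)) := by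
    have := Fintype.ofFinite ι'
    obtain ⟨m, hm⟩ : ∃ m, Fintype.card ι' = m + 1 :=
      ⟨Fintype.card ι' - 1, (Nat.succ_pred_eq_of_pos Fintype.card_pos).symm⟩
    exact ⟨m, ⟨Fintype.equivFinOfCardEq hm⟩⟩
  obtain ⟨f⟩ := f
  refine ⟨n, fun i => W (f.symm i).1, ⟨fun i => hWclopen _, fun i => (f.symm i).2,
    ?_, ?_⟩, fun i a ha b hb => hUsmall _ a (hWsub _ ha) b (hWsub _ hb)⟩
  · intro i j hij
    exact hWdisj (fun h => hij (f.symm.injective (Subtype.ext h)))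
  · rw [← hWunion]
    apply Set.Subset.antisymm
    · exact Set.iUnion_subset fun i => Set.subset_iUnion W _
    · intro z hz
      obtain ⟨i, hi⟩ := Set.mem_iUnion.mp hz
      exact Set.mem_iUnion.mpr ⟨f ⟨i, ⟨z, hi⟩⟩, by simpa using hi⟩


/-- Partitions can be grown by one piece. -/
lemma partition_succ (hne : ∀ x : X, ¬ IsOpen ({x} : Set X)) {C : Set X} {ε : ℝ}
    {n : ℕ} {F : Fin (n + 1) → Set X} (hF : IsPart F C) (hFs : SmallS F ε) :
    ∃ F' : Fin (n + 2) → Set X, IsPart F' C ∧ SmallS F' ε := by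
  classical
  obtain ⟨hclopen, hnonempty, hdisj, hunion⟩ := hF
  obtain ⟨A, B, hA, hB, hAne, hBne, hABdisj, hABunion⟩ :=
    split_two hne (hclopen 0) (hnonempty 0)
  have hAsub : A ⊆ F 0 := hABunion ▸ Set.subset_union_left
  have hBsub : B ⊆ F 0 := hABunion ▸ Set.subset_union_right
  set G : Fin (n + 2) → Set X := Fin.cons B (Function.update F 0 A) with hG
  have hG0 : G 0 = B := rfl
  have hGs : ∀ j : Fin (n + 1), G j.succ = Function.update F 0 A j := fun j => Fin.cons_succ _ _ _
  have hupd : ∀ j : Fin (n + 1), Function.update F 0 A j ⊆ F j := by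
    intro j
    rcases eq_or_ne j 0 with rfl | hj
    · simpa using hAsub
    · simp [Function.update_of_ne hj]
  have hGsub : ∀ i : Fin (n + 2), ∃ j : Fin (n + 1), G i ⊆ F j := by
    intro i
    obtain rfl | ⟨j, rfl⟩ := i.eq_zero_or_eq_succ
    · exact ⟨0, hG0 ▸ hBsub⟩
    · exact ⟨j, (hGs j) ▸ hupd j⟩
  refine ⟨G, ⟨?_, ?_, ?_, ?_⟩, ?_⟩
  · intro i
    obtain rfl | ⟨j, rfl⟩ := i.eq_zero_or_eq_succ
    · exact hG0 ▸ hB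
    · rw [hGs]
      rcases eq_or_ne j 0 with rfl | hj
      · simpa using hA
      · simpa [Function.update_of_ne hj] using hclopen j
  · intro i
    obtain rfl | ⟨j, rfl⟩ := i.eq_zero_or_eq_succ
    · exact hG0 ▸ hBne
    · rw [hGs]
      rcases eq_or_ne j 0 with rfl | hj
      · simpa using hAne
      · simpa [Function.update_of_ne hj] using hnonempty j
  · have hupd_disj : ∀ j j' : Fin (n+1), j ≠ j' →
        Disjoint (Function.update F 0 A j) (Function.update F 0 A j') :=
      fun j j' hjj' => Disjoint.mono (hupd j) (hupd j') (hdisj hjj')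
    have hBu : ∀ j : Fin (n+1), Disjoint B (Function.update F 0 A j) := by
      intro j
      rcases eq_or_ne j 0 with rfl | hj
      · simpa using hABdisj.symm
      · rw [Function.update_of_ne hj]
        exact Disjoint.mono_left hBsub (hdisj (Ne.symm hj))
    intro i i' hii'
    rw [Function.onFun]
    obtain rfl | ⟨j, rfl⟩ := i.eq_zero_or_eq_succ <;>
      obtain rfl | ⟨j', rfl⟩ := i'.eq_zero_or_eq_succ
    · exact absurd rfl hii'
    · rw [hG0, hGs]; exact hBu j'
    · rw [hG0, hGs]; exact (hBu j).symm
    · rw [hGs, hGs]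
      exact hupd_disj j j' (fun h => hii' (by rw [h]))
  · rw [← hunion]
    apply Set.Subset.antisymm
    · apply Set.iUnion_subset
      intro i
      obtain ⟨j, hj⟩ := hGsub i
      exact hj.trans (Set.subset_iUnion F j)
    · intro z hz
      obtain ⟨i, hi⟩ := Set.mem_iUnion.mp hz
      rcases eq_or_ne i 0 with rfl | hi0
      · rcases (hABunion ▸ hi : z ∈ A ∪ B) with hzA | hzB
        · refine Set.mem_iUnion.mpr ⟨Fin.succ 0, ?_⟩
          rw [hGs]
          simpa using hzA
        · exact Set.mem_iUnion.mpr ⟨0, hG0 ▸ hzB⟩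
      · refine Set.mem_iUnion.mpr ⟨Fin.succ i, ?_⟩
        rw [hGs, Function.update_of_ne hi0]
        exact hi
  · intro i
    obtain ⟨j, hj⟩ := hGsub i
    intro a ha b hb
    exact hFs j a (hj ha) b (hj hb)


/-- Transport a partition along an equiv of index types. -/
lemma IsPart.reindex {ι κ : Type} {F : ι → Set X} {C : Set X} (h : IsPart F C)
    (e : κ ≃ ι) : IsPart (F ∘ e) C := by
  obtain ⟨h1, h2, h3, h4⟩ := h
  refine ⟨fun i => h1 _, fun i => h2 _, ?_, ?_⟩
  · intro i j hij
    exact h3 (fun hh => hij (e.injective hh))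
  · rw [← h4]
    exact e.surjective.iUnion_comp F

/-- Partition a nonempty clopen set into `2^j` nonempty clopen small pieces,
for every sufficiently large `j`. -/
lemma exists_partition_pow (hne : ∀ x : X, ¬ IsOpen ({x} : Set X)) {C : Set X}
    (hC : IsClopen C) (hCne : C.Nonempty) {ε : ℝ} (hε : 0 < ε) :
    ∃ j0 : ℕ, ∀ j ≥ j0, ∃ F : (Fin j → Bool) → Set X, IsPart F C ∧ SmallS F ε := by
  obtain ⟨n, F, hF, hFs⟩ := exists_fin_partition hC hCne hε
  -- partitions of any size ≥ n+1
  have grow : ∀ k : ℕ, ∃ F' : Fin (n + 1 + k) → Set X, IsPart F' C ∧ SmallS F' ε := by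
    intro k
    induction k with
    | zero => exact ⟨F, hF, hFs⟩
    | succ k ih =>
      obtain ⟨F', hF', hFs'⟩ := ih
      obtain ⟨F'', hF'', hFs''⟩ := partition_succ (n := n + k) hne
        (hF'.reindex (finCongr (by omega))) (fun i => hFs' _)
      exact ⟨fun i => F'' (Fin.cast (by omega) i), hF''.reindex (finCongr (by omega)),
        fun i => hFs'' _⟩
  refine ⟨n + 1, fun j hj => ?_⟩
  have h2j : n + 1 ≤ 2 ^ j := le_trans hj (Nat.le_of_lt (Nat.lt_two_pow_self (n := j)))
  obtain ⟨k, hk⟩ : ∃ k, 2 ^ j = n + 1 + k := ⟨2 ^ j - (n + 1), by omega⟩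
  obtain ⟨F', hF', hFs'⟩ := grow k
  have hcard : Fintype.card (Fin j → Bool) = n + 1 + k := by
    simp [← hk]
  refine ⟨F' ∘ (Fintype.equivFinOfCardEq hcard), hF'.reindex _, fun i => hFs' _⟩


/-- Refine a partition of the whole space indexed by `Fin m → Bool` to one indexed by
`Fin (m + J) → Bool` with small pieces. -/
lemma level_refine (hne : ∀ x : X, ¬ IsOpen ({x} : Set X)) {m : ℕ}
    {E : (Fin m → Bool) → Set X} (hE : IsPart E Set.univ) {ε : ℝ} (hε : 0 < ε) :
    ∃ J, 0 < J ∧ ∃ E' : (Fin (m + J) → Bool) → Set X,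
      IsPart E' Set.univ ∧ SmallS E' ε ∧
      ∀ τ : Fin (m + J) → Bool, E' τ ⊆ E (fun i => τ ⟨i.1, by omega⟩) := by
  classical
  have hpow : ∀ σ : Fin m → Bool, ∃ j0 : ℕ, ∀ j ≥ j0,
      ∃ F : (Fin j → Bool) → Set X, IsPart F (E σ) ∧ SmallS F ε :=
    fun σ => exists_partition_pow hne (hE.1 σ) (hE.2.1 σ) hε
  choose j0 hj0 using hpow
  set J : ℕ := max (Finset.univ.sup j0) 1 with hJ
  have hJpos : 0 < J := lt_of_lt_of_le Nat.one_pos (le_max_right _ _)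
  have hJge : ∀ σ, j0 σ ≤ J :=
    fun σ => le_trans (Finset.le_sup (Finset.mem_univ σ)) (le_max_left _ _)
  have hFex : ∀ σ : Fin m → Bool, ∃ F : (Fin J → Bool) → Set X,
      IsPart F (E σ) ∧ SmallS F ε := fun σ => hj0 σ J (hJge σ)
  choose Fp hFp hFps using hFex
  -- splitting of an index
  set fst : (Fin (m + J) → Bool) → (Fin m → Bool) :=
    fun τ i => τ ⟨i.1, by omega⟩ with hfst
  set snd : (Fin (m + J) → Bool) → (Fin J → Bool) :=
    fun τ i => τ ⟨m + i.1, by omega⟩ with hsnd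
  have hrecon : ∀ τ τ' : Fin (m + J) → Bool, fst τ = fst τ' → snd τ = snd τ' → τ = τ' := by
    intro τ τ' h1 h2
    funext i
    by_cases hi : i.1 < m
    · have := congrFun h1 ⟨i.1, hi⟩
      simpa [hfst, Fin.eta] using this
    · have hi2 : i.1 - m < J := by omega
      have := congrFun h2 ⟨i.1 - m, hi2⟩
      simp only [hsnd] at this
      have hmi : m + (i.1 - m) = i.1 := by omega
      convert this using 3 <;> simp [hmi]
  have hcomb : ∀ (σ : Fin m → Bool) (ρ : Fin J → Bool),
      ∃ τ : Fin (m + J) → Bool, fst τ = σ ∧ snd τ = ρ := by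
    intro σ ρ
    refine ⟨fun i => if h : i.1 < m then σ ⟨i.1, h⟩ else ρ ⟨i.1 - m, by omega⟩, ?_, ?_⟩
    · funext i
      simp [hfst, i.2]
    · funext i
      have h1 : ¬ (m + i.1 < m) := by omega
      simp only [hsnd, dif_neg h1]
      congr 1
      ext
      simp
  set E' : (Fin (m + J) → Bool) → Set X := fun τ => Fp (fst τ) (snd τ) with hE'
  have hE'sub : ∀ τ, E' τ ⊆ E (fst τ) := fun τ => (hFp (fst τ)).subset (snd τ)
  refine ⟨J, hJpos, E', ⟨fun τ => (hFp (fst τ)).1 _, fun τ => (hFp (fst τ)).2.1 _, ?_, ?_⟩,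
    fun τ => hFps (fst τ) (snd τ), hE'sub⟩
  · intro τ τ' hττ'
    rw [Function.onFun]
    by_cases h1 : fst τ = fst τ'
    · have h2 : snd τ ≠ snd τ' := fun h => hττ' (hrecon _ _ h1 h)
      have hd := (hFp (fst τ')).2.2.1 h2
      show Disjoint (Fp (fst τ) (snd τ)) (Fp (fst τ') (snd τ'))
      rw [h1]
      exact hd
    · exact Disjoint.mono (hE'sub τ) (hE'sub τ') (hE.2.2.1 h1)
  · apply Set.Subset.antisymm (Set.subset_univ _)
    intro z _
    have hz : z ∈ ⋃ σ, E σ := hE.2.2.2.symm ▸ Set.mem_univ z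
    obtain ⟨σ, hσ⟩ := Set.mem_iUnion.mp hz
    have hz2 : z ∈ ⋃ ρ, Fp σ ρ := (hFp σ).2.2.2.symm ▸ hσ
    obtain ⟨ρ, hρ⟩ := Set.mem_iUnion.mp hz2
    obtain ⟨τ, hτ1, hτ2⟩ := hcomb σ ρ
    exact Set.mem_iUnion.mpr ⟨τ, show z ∈ Fp (fst τ) (snd τ) by rw [hτ1, hτ2]; exact hρ⟩


abbrev Lev (X : Type*) := Σ m : ℕ, ((Fin m → Bool) → Set X)

def LevInv (R₀ : ℝ) (k : ℕ) (L : Lev X) : Prop :=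
  IsPart L.2 Set.univ ∧ SmallS L.2 ((1/2) ^ k * R₀)

def LevRel (L L' : Lev X) : Prop :=
  ∃ h : L.1 < L'.1, ∀ τ : Fin L'.1 → Bool, L'.2 τ ⊆ L.2 (fun i => τ (Fin.castLE h.le i))

lemma levInv_base [Nonempty X] (R₀ : ℝ) (hbound : ∀ a b : X, dist a b ≤ R₀) :
    LevInv R₀ 0 (⟨0, fun _ => Set.univ⟩ : Lev X) := by
  refine ⟨⟨fun _ => isClopen_univ, fun _ => Set.univ_nonempty, ?_, ?_⟩, ?_⟩
  · intro i j hij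
    exact absurd (Subsingleton.elim i j) hij
  · exact Set.iUnion_const _
  · intro i a _ b _
    simpa using hbound a b

lemma levStep (hne : ∀ x : X, ¬ IsOpen ({x} : Set X)) (R₀ : ℝ) (hpos : 0 < R₀)
    (k : ℕ) (L : Lev X) (hL : LevInv R₀ k L) :
    ∃ L' : Lev X, LevInv R₀ (k + 1) L' ∧ LevRel L L' := by
  have hε : (0:ℝ) < (1/2) ^ (k+1) * R₀ := by positivity
  obtain ⟨J, hJpos, E', hE'p, hE's, hE'sub⟩ := level_refine hne hL.1 hε
  refine ⟨⟨L.1 + J, E'⟩, ⟨hE'p, hE's⟩, ⟨Nat.lt_add_of_pos_right hJpos, fun τ => ?_⟩⟩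
  exact hE'sub τ

noncomputable def levSeq [Nonempty X] (hne : ∀ x : X, ¬ IsOpen ({x} : Set X)) (R₀ : ℝ)
    (hpos : 0 < R₀) (hbound : ∀ a b : X, dist a b ≤ R₀) :
    ∀ k : ℕ, {L : Lev X // LevInv R₀ k L} := fun k =>
  Nat.rec ⟨⟨0, fun _ => Set.univ⟩, levInv_base R₀ hbound⟩
    (fun k ih => ⟨(levStep hne R₀ hpos k ih.1 ih.2).choose,
      (levStep hne R₀ hpos k ih.1 ih.2).choose_spec.1⟩) k

lemma levSeq_rel [Nonempty X] (hne : ∀ x : X, ¬ IsOpen ({x} : Set X)) (R₀ : ℝ)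
    (hpos : 0 < R₀) (hbound : ∀ a b : X, dist a b ≤ R₀) (k : ℕ) :
    LevRel (levSeq hne R₀ hpos hbound k).1 (levSeq hne R₀ hpos hbound (k+1)).1 :=
  (levStep hne R₀ hpos k (levSeq hne R₀ hpos hbound k).1
    (levSeq hne R₀ hpos hbound k).2).choose_spec.2

lemma levSeq_zero [Nonempty X] (hne : ∀ x : X, ¬ IsOpen ({x} : Set X)) (R₀ : ℝ)
    (hpos : 0 < R₀) (hbound : ∀ a b : X, dist a b ≤ R₀) :
    (levSeq hne R₀ hpos hbound 0).1.1 = 0 := rfl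


theorem exists_homeo_bool [Nonempty X] (hne : ∀ x : X, ¬ IsOpen ({x} : Set X)) :
    Nonempty ((ℕ → Bool) ≃ₜ X) := by
  classical
  obtain ⟨R, hR⟩ := Metric.isBounded_iff.mp (isCompact_univ : IsCompact (Set.univ : Set X)).isBounded
  set R₀ : ℝ := max R 1 with hR₀
  have hpos : (0:ℝ) < R₀ := lt_of_lt_of_le one_pos (le_max_right _ _)
  have hbound : ∀ a b : X, dist a b ≤ R₀ :=
    fun a b => le_trans (hR trivial trivial) (le_max_left _ _)
  set seq := levSeq hne R₀ hpos hbound with hseq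
  set m : ℕ → ℕ := fun k => (seq k).1.1 with hm
  set E : ∀ k, (Fin (m k) → Bool) → Set X := fun k => (seq k).1.2 with hE
  have hmlt : ∀ k, m k < m (k + 1) := fun k => (levSeq_rel hne R₀ hpos hbound k).1
  have hmge : ∀ k, k ≤ m k := by
    intro k
    induction k with
    | zero => exact Nat.zero_le _
    | succ k ih => exact lt_of_le_of_lt ih (hmlt k)
  -- the sets along a branch
  set D : ℕ → (ℕ → Bool) → Set X := fun k x => E k (fun i => x i.1) with hD
  have hDclopen : ∀ k x, IsClopen (D k x) := fun k x => (seq k).2.1.1 _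
  have hDne : ∀ k x, (D k x).Nonempty := fun k x => (seq k).2.1.2.1 _
  have hDanti : ∀ k x, D (k + 1) x ⊆ D k x := by
    intro k x
    obtain ⟨hlt, hsub⟩ := levSeq_rel hne R₀ hpos hbound k
    exact hsub (fun i => x i.1)
  have hDsmall : ∀ k x, ∀ a ∈ D k x, ∀ b ∈ D k x, dist a b ≤ (1/2) ^ k * R₀ :=
    fun k x => (seq k).2.2 _
  have hDinter : ∀ x, (⋂ k, D k x).Nonempty := by
    intro x
    exact IsCompact.nonempty_iInter_of_sequence_nonempty_isCompact_isClosed _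
      (fun k => hDanti k x) (fun k => hDne k x)
      ((hDclopen 0 x).1.isCompact) (fun k => (hDclopen k x).1)
  choose g hg using hDinter
  have hgmem : ∀ x k, g x ∈ D k x := fun x k => Set.mem_iInter.mp (hg x) k
  have htend : Filter.Tendsto (fun k : ℕ => (1/2:ℝ) ^ k * R₀) Filter.atTop (nhds 0) := by
    simpa using (tendsto_pow_atTop_nhds_zero_of_lt_one (by norm_num) (by norm_num)
      : Filter.Tendsto (fun k : ℕ => (1/2:ℝ)^k) Filter.atTop (nhds 0)).mul_const R₀
  -- continuity of g
  have hgcont : Continuous g := by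
    rw [continuous_iff_continuousAt]
    intro x
    rw [ContinuousAt, Metric.tendsto_nhds]
    intro ε hε
    obtain ⟨k, hk⟩ := (htend.eventually_lt_const hε).exists
    have hU : {y : ℕ → Bool | ∀ i < m k, y i = x i} ∈ nhds x := by
      have heq : {y : ℕ → Bool | ∀ i < m k, y i = x i}
          = ⋂ i ∈ Finset.range (m k), {y : ℕ → Bool | y i = x i} := by
        ext y; simp [Finset.mem_range]
      rw [heq]
      refine (Filter.biInter_finset_mem _).mpr (fun i _ => ?_)
      have hopen : IsOpen {y : ℕ → Bool | y i = x i} := by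
        have : {y : ℕ → Bool | y i = x i} = (fun y : ℕ → Bool => y i) ⁻¹' {x i} := by
          ext y; simp
        rw [this]
        exact (isOpen_discrete ({x i} : Set Bool)).preimage (continuous_apply i)
      exact hopen.mem_nhds rfl
    refine Filter.eventually_of_mem hU (fun y hy => ?_)
    have hDeq : D k y = D k x := by
      exact congrArg (E k) (funext fun i : Fin (m k) => hy i.1 i.2)
    have h1 : g y ∈ D k x := hDeq ▸ hgmem y k
    exact lt_of_le_of_lt (hDsmall k x _ h1 _ (hgmem x k)) hk
  -- injectivity
  have hginj : Function.Injective g := by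
    intro x y hxy
    by_contra hne'
    obtain ⟨i, hi⟩ : ∃ i, x i ≠ y i := by
      by_contra hh
      push_neg at hh
      exact hne' (funext hh)
    set k := i + 1 with hk
    have him : i < m k := lt_of_lt_of_le (Nat.lt_succ_self i) (hmge k)
    have hσ : (fun j : Fin (m k) => x j.1) ≠ (fun j : Fin (m k) => y j.1) := by
      intro hcongr
      exact hi (congrFun hcongr ⟨i, him⟩)
    have hdisj : Disjoint (D k x) (D k y) := (seq k).2.1.2.2.1 hσ
    exact Set.disjoint_left.mp hdisj (hgmem x k) (hxy ▸ hgmem y k)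
  -- surjectivity
  have hgsurj : Function.Surjective g := by
    intro z
    set S : ℕ → Set (ℕ → Bool) := fun k => {x | z ∈ D k x} with hS
    have hSne : ∀ k, (S k).Nonempty := by
      intro k
      have hz : z ∈ ⋃ σ, E k σ := (seq k).2.1.2.2.2.symm ▸ Set.mem_univ z
      obtain ⟨σ, hσ⟩ := Set.mem_iUnion.mp hz
      refine ⟨fun n => if h : n < m k then σ ⟨n, h⟩ else false, ?_⟩
      show z ∈ E k _
      have : (fun i : Fin (m k) =>
          (fun n => if h : n < m k then σ ⟨n, h⟩ else false) i.1) = σ := by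
        funext i
        simp [i.2]
      rw [this]
      exact hσ
    have hSclosed : ∀ k, IsClosed (S k) := by
      intro k
      have : S k = (fun x : ℕ → Bool => (fun i : Fin (m k) => x i.1)) ⁻¹'
          {σ | z ∈ E k σ} := rfl
      rw [this]
      exact (isClosed_discrete _).preimage (continuous_pi (fun i => continuous_apply i.1))
    have hSanti : ∀ k, S (k + 1) ⊆ S k := fun k x hx => hDanti k x hx
    obtain ⟨x, hx⟩ := IsCompact.nonempty_iInter_of_sequence_nonempty_isCompact_isClosed _
      hSanti hSne ((hSclosed 0).isCompact) hSclosed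
    have hzx : ∀ k, z ∈ D k x := fun k => Set.mem_iInter.mp hx k
    refine ⟨x, ?_⟩
    have hdd : ∀ k, dist (g x) z ≤ (1/2) ^ k * R₀ :=
      fun k => hDsmall k x _ (hgmem x k) _ (hzx k)
    have : dist (g x) z ≤ 0 := ge_of_tendsto' htend hdd
    have := le_antisymm this dist_nonneg
    exact dist_eq_zero.mp this
  exact ⟨(Continuous.homeoOfEquivCompactToT2
    (f := Equiv.ofBijective g ⟨hginj, hgsurj⟩) hgcont).symm.symm⟩

end PartC

/-- A nonempty compact Hausdorff second-countable totally disconnected space which is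
not homeomorphic to the Cantor set has an isolated point. -/
theorem stmt_4 {X : Type*} [TopologicalSpace X] [Nonempty X] [CompactSpace X] [T2Space X]
    [SecondCountableTopology X] [TotallyDisconnectedSpace X]
    (h : ¬ Nonempty (X ≃ₜ cantorSet)) :
    ∃ x : X, IsOpen ({x} : Set X) := by
  by_contra hcon
  push_neg at hcon
  letI : MetricSpace X := TopologicalSpace.metrizableSpaceMetric X
  obtain ⟨e⟩ := exists_homeo_bool hcon
  exact h ⟨e.symm.trans cantorBoolHomeo⟩
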